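/- arXiv:2006.14687 — 6 statements merged into one kernel-verified Lean document; each statement's English description precedes it below -/
import Mathlib

section
/- Let w : ℝ^N → ℝ satisfy the decay bound 0 ≤ w(x) ≤ A₅(1+|x|)^{−(N−2)}. Fix y₀ with |y₀| = 1 and y ∈ ∂B₂(y₀). For λ ∈ (0,1) set w₀(x) = w((x−Ry₀)/λ) and w_y(x) = w((x−Ry)/(1−λ)). If ᾱ > 2*/2 and β̄ ≥ 1, then there exists C > 0, independent of R, y, λ, such that ∫_{ℝ^N} w₀^{ᾱ} w_y^{β̄} dx ≤ C R^{−(N−2)} for all R ≥ 1. -/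
open MeasureTheory Real Filter
open scoped Topology

private lemma stmt7_key (e α β R u v : ℝ) (he : 0 < e) (hα : e ≤ α) (hβ : e ≤ β)
    (hR : 0 < R) (hu : 1 ≤ u) (hv : 1 ≤ v) (huv : 2 * R + 2 ≤ u + v) :
    u ^ (-α) * v ^ (-β) ≤ R ^ (-e) * (v ^ (-(α + β - e)) + u ^ (-α)) := by
  have hu0 : (0:ℝ) < u := by linarith
  have hv0 : (0:ℝ) < v := by linarith
  rcases le_total v u with hc | hc
  · have hRu : R ≤ u := by linarith
    calc u ^ (-α) * v ^ (-β) = (u ^ (-e) * u ^ (-(α - e))) * v ^ (-β) := by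
          rw [← Real.rpow_add hu0]; ring_nf
      _ ≤ (R ^ (-e) * v ^ (-(α - e))) * v ^ (-β) := by
          apply mul_le_mul_of_nonneg_right _ (Real.rpow_nonneg hv0.le _)
          exact mul_le_mul (Real.rpow_le_rpow_of_nonpos hR hRu (by linarith))
            (Real.rpow_le_rpow_of_nonpos hv0 hc (by linarith))
            (Real.rpow_nonneg hu0.le _) (Real.rpow_nonneg (by positivity) _)
      _ = R ^ (-e) * v ^ (-(α + β - e)) := by
          rw [mul_assoc, ← Real.rpow_add hv0]; ring_nf
      _ ≤ R ^ (-e) * (v ^ (-(α + β - e)) + u ^ (-α)) :=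
          mul_le_mul_of_nonneg_left (le_add_of_nonneg_right (Real.rpow_nonneg hu0.le _))
            (Real.rpow_nonneg hR.le _)
  · have hRv : R ≤ v := by linarith
    calc u ^ (-α) * v ^ (-β) = u ^ (-α) * (v ^ (-e) * v ^ (-(β - e))) := by
          rw [← Real.rpow_add hv0]; ring_nf
      _ ≤ u ^ (-α) * (R ^ (-e) * 1) := by
          apply mul_le_mul_of_nonneg_left _ (Real.rpow_nonneg hu0.le _)
          exact mul_le_mul (Real.rpow_le_rpow_of_nonpos hR hRv (by linarith))
            (Real.rpow_le_one_of_one_le_of_nonpos hv (by linarith))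
            (Real.rpow_nonneg hv0.le _) (Real.rpow_nonneg hR.le _)
      _ = R ^ (-e) * u ^ (-α) := by ring
      _ ≤ R ^ (-e) * (v ^ (-(α + β - e)) + u ^ (-α)) :=
          mul_le_mul_of_nonneg_left (le_add_of_nonneg_left (Real.rpow_nonneg hv0.le _))
            (Real.rpow_nonneg hR.le _)

set_option maxHeartbeats 1000000 in
/-- Lemma on interaction of powers of two translated and dilated solitons:
if `w` decays like `(1+|x|)^{-(N-2)}`, `ᾱ > 2*/2` and `β̄ ≥ 1`, then
`∫ w₀^ᾱ w_y^β̄ ≤ C R^{-(N-2)}` uniformly in `R ≥ 1`, `y ∈ ∂B₂(y₀)`, `λ ∈ (0,1)`. -/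
theorem stmt7 (N : ℕ) (hN : 3 ≤ N) (p : ℝ) (hp : p = 2 * N / ((N : ℝ) - 2))
    (A₅ : ℝ) (hA₅ : 0 < A₅)
    (w : EuclideanSpace ℝ (Fin N) → ℝ)
    (hw : ∀ x, 0 ≤ w x ∧ w x ≤ A₅ * (1 + ‖x‖) ^ (-((N : ℝ) - 2)))
    (y₀ : EuclideanSpace ℝ (Fin N)) (hy₀ : ‖y₀‖ = 1)
    (a b : ℝ) (ha : p / 2 < a) (hb : 1 ≤ b) :
    ∃ C > 0, ∀ R : ℝ, 1 ≤ R → ∀ y : EuclideanSpace ℝ (Fin N), ‖y - y₀‖ = 2 →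
      ∀ l : ℝ, 0 < l → l < 1 →
        ∫ x, (w (l⁻¹ • (x - R • y₀))) ^ a * (w ((1 - l)⁻¹ • (x - R • y))) ^ b
          ≤ C * R ^ (-((N : ℝ) - 2)) := by
  set e : ℝ := (N : ℝ) - 2 with he_def
  have hN3 : (3:ℝ) ≤ (N:ℝ) := by exact_mod_cast hN
  have he : 0 < e := by simp only [he_def]; linarith
  set α : ℝ := e * a with hα_def
  set β : ℝ := e * b with hβ_def
  set γ : ℝ := α + β - e with hγ_def
  have hNα : (N:ℝ) < α := by
    have hpa : (N:ℝ) / e < a := by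
      rw [hp] at ha
      calc (N:ℝ) / e = 2 * N / e / 2 := by ring
        _ < a := ha
    calc (N:ℝ) = e * ((N:ℝ)/e) := by field_simp
      _ < e * a := by exact mul_lt_mul_of_pos_left hpa he
  have heα : e ≤ α := by nlinarith
  have heβ : e ≤ β := le_mul_of_one_le_right he.le hb
  have hNγ : (N:ℝ) < γ := by simp only [hγ_def]; linarith
  have ha0 : (0:ℝ) ≤ a := by nlinarith
  have hb0 : (0:ℝ) ≤ b := by linarith
  have hIγ : Integrable (fun x : EuclideanSpace ℝ (Fin N) => (1 + ‖x‖) ^ (-γ)) :=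
    integrable_one_add_norm (by rw [finrank_euclideanSpace, Fintype.card_fin]; exact hNγ)
  have hIα : Integrable (fun x : EuclideanSpace ℝ (Fin N) => (1 + ‖x‖) ^ (-α)) :=
    integrable_one_add_norm (by rw [finrank_euclideanSpace, Fintype.card_fin]; exact hNα)
  set Iγ : ℝ := ∫ x : EuclideanSpace ℝ (Fin N), (1 + ‖x‖) ^ (-γ) with hIγ_def
  set Iα : ℝ := ∫ x : EuclideanSpace ℝ (Fin N), (1 + ‖x‖) ^ (-α) with hIα_def
  have hIγ0 : 0 ≤ Iγ := integral_nonneg fun x => Real.rpow_nonneg (by positivity) _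
  have hIα0 : 0 ≤ Iα := integral_nonneg fun x => Real.rpow_nonneg (by positivity) _
  have hAA : (0:ℝ) < A₅ ^ a * A₅ ^ b := by positivity
  refine ⟨A₅ ^ a * A₅ ^ b * (Iγ + Iα) + 1, by nlinarith, ?_⟩
  intro R hR y hy l hl hl1
  have hR0 : (0:ℝ) < R := by linarith
  have hl2 : (0:ℝ) < 1 - l := by linarith
  -- the dominating function
  set c : ℝ := A₅ ^ a * A₅ ^ b * R ^ (-e) with hc_def
  set g : EuclideanSpace ℝ (Fin N) → ℝ :=
    fun x => c * ((1 + ‖x - R • y‖) ^ (-γ) + (1 + ‖x - R • y₀‖) ^ (-α)) with hg_def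
  have hgint : Integrable g :=
    (((hIγ.comp_sub_right (R • y)).add (hIα.comp_sub_right (R • y₀)))).const_mul c
  -- pointwise bound
  have hpt : ∀ x : EuclideanSpace ℝ (Fin N),
      (w (l⁻¹ • (x - R • y₀))) ^ a * (w ((1 - l)⁻¹ • (x - R • y))) ^ b ≤ g x := by
    intro x
    set u : ℝ := 1 + ‖x - R • y₀‖ with hu_def
    set v : ℝ := 1 + ‖x - R • y‖ with hv_def
    have hu1 : (1:ℝ) ≤ u := by simp only [hu_def]; nlinarith [norm_nonneg (x - R • y₀)]
    have hv1 : (1:ℝ) ≤ v := by simp only [hv_def]; nlinarith [norm_nonneg (x - R • y)]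
    have hu0 : (0:ℝ) < u := by linarith
    have hv0 : (0:ℝ) < v := by linarith
    set z₁ : EuclideanSpace ℝ (Fin N) := l⁻¹ • (x - R • y₀) with hz₁
    set z₂ : EuclideanSpace ℝ (Fin N) := (1 - l)⁻¹ • (x - R • y) with hz₂
    have hdecay : ∀ (t : ℝ) (ht : 0 < t) (ht1 : t < 1) (s : EuclideanSpace ℝ (Fin N)),
        w (t⁻¹ • s) ≤ A₅ * (1 + ‖s‖) ^ (-e) := by
      intro t ht ht1 s
      refine le_trans (hw (t⁻¹ • s)).2 ?_
      apply mul_le_mul_of_nonneg_left _ hA₅.le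
      apply Real.rpow_le_rpow_of_nonpos (by nlinarith [norm_nonneg s]) _ (by linarith)
      have h1t : (1:ℝ) ≤ t⁻¹ := by
        have := mul_inv_cancel₀ (ne_of_gt ht)
        nlinarith [inv_pos.mpr ht]
      rw [norm_smul, Real.norm_eq_abs, abs_of_pos (inv_pos.mpr ht)]
      nlinarith [norm_nonneg s]
    have hq1 : (w z₁) ^ a ≤ A₅ ^ a * u ^ (-α) := by
      calc (w z₁) ^ a ≤ (A₅ * u ^ (-e)) ^ a :=
            Real.rpow_le_rpow (hw z₁).1 (hdecay l hl hl1 _) ha0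
        _ = A₅ ^ a * (u ^ (-e)) ^ a := Real.mul_rpow hA₅.le (Real.rpow_nonneg hu0.le _)
        _ = A₅ ^ a * u ^ (-α) := by
            rw [← Real.rpow_mul hu0.le, neg_mul, ← hα_def]
    have hq2 : (w z₂) ^ b ≤ A₅ ^ b * v ^ (-β) := by
      calc (w z₂) ^ b ≤ (A₅ * v ^ (-e)) ^ b :=
            Real.rpow_le_rpow (hw z₂).1 (hdecay (1 - l) hl2 (by linarith) _) hb0
        _ = A₅ ^ b * (v ^ (-e)) ^ b := Real.mul_rpow hA₅.le (Real.rpow_nonneg hv0.le _)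
        _ = A₅ ^ b * v ^ (-β) := by
            rw [← Real.rpow_mul hv0.le, neg_mul, ← hβ_def]
    have hsum : 2 * R + 2 ≤ u + v := by
      have hdist : ‖(x - R • y₀) - (x - R • y)‖ = 2 * R := by
        have heq : (x - R • y₀) - (x - R • y) = R • (y - y₀) := by module
        rw [heq, norm_smul, Real.norm_eq_abs, abs_of_pos hR0, hy]; ring
      have := norm_sub_le (x - R • y₀) (x - R • y)
      rw [hdist] at this
      simp only [hu_def, hv_def]; linarith
    calc (w z₁) ^ a * (w z₂) ^ b ≤ (A₅ ^ a * u ^ (-α)) * (A₅ ^ b * v ^ (-β)) :=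
          mul_le_mul hq1 hq2 (Real.rpow_nonneg (hw z₂).1 b) (by positivity)
      _ = (A₅ ^ a * A₅ ^ b) * (u ^ (-α) * v ^ (-β)) := by ring
      _ ≤ (A₅ ^ a * A₅ ^ b) * (R ^ (-e) * (v ^ (-(α + β - e)) + u ^ (-α))) :=
          mul_le_mul_of_nonneg_left
            (stmt7_key e α β R u v he heα heβ hR0 hu1 hv1 hsum) hAA.le
      _ = g x := by simp only [hg_def, hc_def, hγ_def]; ring
  have hmono : (∫ x, (w (l⁻¹ • (x - R • y₀))) ^ a * (w ((1 - l)⁻¹ • (x - R • y))) ^ b)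
      ≤ ∫ x, g x := by
    apply integral_mono_of_nonneg
    · exact Eventually.of_forall fun x =>
        mul_nonneg (Real.rpow_nonneg (hw _).1 _) (Real.rpow_nonneg (hw _).1 _)
    · exact hgint
    · exact Eventually.of_forall hpt
  have hgval : ∫ x, g x = c * (Iγ + Iα) := by
    simp only [hg_def]
    rw [integral_const_mul,
      integral_add (hIγ.comp_sub_right (R • y)) (hIα.comp_sub_right (R • y₀)),
      integral_sub_right_eq_self (fun z : EuclideanSpace ℝ (Fin N) => (1 + ‖z‖) ^ (-γ)) (R • y),
      integral_sub_right_eq_self (fun z : EuclideanSpace ℝ (Fin N) => (1 + ‖z‖) ^ (-α)) (R • y₀)]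
  have hRe : (0:ℝ) ≤ R ^ (-e) := Real.rpow_nonneg hR0.le _
  calc (∫ x, (w (l⁻¹ • (x - R • y₀))) ^ a * (w ((1 - l)⁻¹ • (x - R • y))) ^ b)
      ≤ c * (Iγ + Iα) := hgval ▸ hmono
    _ = (A₅ ^ a * A₅ ^ b * (Iγ + Iα)) * R ^ (-e) := by rw [hc_def]; ring
    _ ≤ (A₅ ^ a * A₅ ^ b * (Iγ + Iα) + 1) * R ^ (-e) := by nlinarith
end

section
/- Let f satisfy |f(s)| ≤ A₂|s|^{2*−1} and let w satisfy 0 ≤ w(x) ≤ A₅(1+|x|)^{−(N−2)}. With w₀, w_y the rescaled translates as above, the interaction term ε_λ^R := ∫_{ℝ^N} f(w₀) w_y dx satisfies ε_λ^R ≤ C R^{−(N−2)} for a constant C independent of y ∈ ∂B₂(y₀), λ ∈ [0,1], and R ≥ 1. -/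
/-!
With `b = N - 2` and `q = 2* - 1 = (N + 2)/(N - 2)` one has `b q = N + 2 > N`. Rescaling by
`λ, 1 - λ ≤ 1` only improves the decay of `w`, so with `X = 1 + |x - R y₀|`, `Y = 1 + |x - R y|`,
`|f(w₀) w_y| ≲ X^{-bq} Y^{-b}`. Since `X + Y ≥ 2R`, one of `X, Y` is at least `R`, and as `bq ≥ b`
this gives `X^{-bq} Y^{-b} ≤ R^{-b} (X^{-bq} + Y^{-bq})`. Both terms are translates of the
integrable function `(1 + |x|)^{-bq}`, whose integral does not depend on `R`, `y` or `λ`.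
-/

open MeasureTheory Real

theorem rpow_neg_mul_rpow_neg_le_of_le_max {A B R a b : ℝ} (hA : 0 < A) (hB : 0 < B)
    (hR : 0 < R) (hRAB : R ≤ max A B) (hb : 0 ≤ b) (hba : b ≤ a) :
    A ^ (-a) * B ^ (-b) ≤ R ^ (-b) * (A ^ (-a) + B ^ (-a)) := by
  have hAa : 0 ≤ A ^ (-a) := by positivity
  have hBa : 0 ≤ B ^ (-a) := by positivity
  have hRb : 0 ≤ R ^ (-b) := by positivity
  rcases le_or_gt R B with hRB | hBR
  · calc A ^ (-a) * B ^ (-b) ≤ A ^ (-a) * R ^ (-b) :=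
          mul_le_mul_of_nonneg_left (rpow_le_rpow_of_nonpos hR hRB (by linarith)) hAa
      _ ≤ R ^ (-b) * (A ^ (-a) + B ^ (-a)) := by nlinarith
  · have hRA : R ≤ A := by simpa [hBR.not_ge] using hRAB
    calc A ^ (-a) * B ^ (-b) = A ^ (-a) * (B ^ (-a) * B ^ (a - b)) := by
          rw [← rpow_add hB]; ring_nf
      _ ≤ R ^ (-a) * (B ^ (-a) * R ^ (a - b)) := by
          refine mul_le_mul (rpow_le_rpow_of_nonpos hR hRA (by linarith)) ?_ (by positivity)
            (by positivity)
          exact mul_le_mul_of_nonneg_left (rpow_le_rpow hB.le hBR.le (by linarith)) hBa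
      _ = R ^ (-b) * B ^ (-a) := by
          rw [mul_left_comm, ← rpow_add hR]; ring_nf
      _ ≤ R ^ (-b) * (A ^ (-a) + B ^ (-a)) := by nlinarith

theorem apply_inv_smul_le_of_decay {E : Type*} [NormedAddCommGroup E] [NormedSpace ℝ E]
    {w : E → ℝ} {A b t : ℝ} (hA : 0 ≤ A) (hb : 0 ≤ b)
    (hw : ∀ x, w x ≤ A * (1 + ‖x‖) ^ (-b)) (ht : 0 < t) (ht1 : t ≤ 1) (z : E) :
    w (t⁻¹ • z) ≤ A * (1 + ‖z‖) ^ (-b) := by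
  refine (hw _).trans (mul_le_mul_of_nonneg_left ?_ hA)
  refine rpow_le_rpow_of_nonpos (by positivity) ?_ (neg_nonpos.mpr hb)
  have : ‖z‖ ≤ ‖t⁻¹ • z‖ := by
    rw [norm_smul, Real.norm_eq_abs, abs_of_pos (inv_pos.mpr ht)]
    exact le_mul_of_one_le_left (norm_nonneg z) (one_le_inv₀ ht |>.mpr ht1)
  linarith

theorem rpow_le_of_le_mul_rpow_neg {s A X b q : ℝ} (hs : 0 ≤ s) (hA : 0 ≤ A) (hX : 0 < X)
    (hq : 0 ≤ q) (hsX : s ≤ A * X ^ (-b)) : s ^ q ≤ A ^ q * X ^ (-(b * q)) := by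
  calc s ^ q ≤ (A * X ^ (-b)) ^ q := rpow_le_rpow hs hsX hq
    _ = A ^ q * X ^ (-(b * q)) := by
      rw [mul_rpow hA (by positivity), ← rpow_mul hX.le, neg_mul]

theorem integral_le_of_abs_le_add_translates {E : Type*} [NormedAddCommGroup E]
    [MeasurableSpace E] [MeasurableAdd E] {μ : Measure E} [μ.IsAddRightInvariant]
    {h ρ : E → ℝ} (hρ : Integrable ρ μ) {c : ℝ} {P Q : E}
    (hbound : ∀ x, |h x| ≤ c * (ρ (x - P) + ρ (x - Q))) :
    ∫ x, h x ∂μ ≤ c * (2 * ∫ x, ρ x ∂μ) := by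
  have hint : Integrable (fun x ↦ c * (ρ (x - P) + ρ (x - Q))) μ :=
    ((hρ.comp_sub_right P).add (hρ.comp_sub_right Q)).const_mul c
  calc ∫ x, h x ∂μ ≤ ∫ x, |h x| ∂μ := by
        simpa only [Real.norm_eq_abs] using (le_abs_self _).trans (norm_integral_le_integral_norm h)
    _ ≤ ∫ x, c * (ρ (x - P) + ρ (x - Q)) ∂μ :=
        integral_mono_of_nonneg (.of_forall fun x ↦ abs_nonneg _) hint (.of_forall hbound)
    _ = c * (2 * ∫ x, ρ x ∂μ) := by
        rw [integral_const_mul, integral_add (hρ.comp_sub_right P) (hρ.comp_sub_right Q),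
          integral_sub_right_eq_self, integral_sub_right_eq_self, two_mul]

section Interaction

variable {E : Type*} [NormedAddCommGroup E] [NormedSpace ℝ E] {f : ℝ → ℝ} {w : E → ℝ}
  {q b A₂ A₅ R s t : ℝ} {P Q : E}

theorem abs_mul_le_of_rpow_bound_of_decay (hq : 1 ≤ q) (hb : 0 ≤ b) (hA₂ : 0 ≤ A₂)
    (hA₅ : 0 ≤ A₅) (hf : ∀ s, |f s| ≤ A₂ * |s| ^ q)
    (hw : ∀ x, 0 ≤ w x ∧ w x ≤ A₅ * (1 + ‖x‖) ^ (-b)) (hR : 0 < R) (hPQ : 2 * R ≤ ‖P - Q‖)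
    (hs : 0 < s) (hs1 : s ≤ 1) (ht : 0 < t) (ht1 : t ≤ 1) (x : E) :
    |f (w (s⁻¹ • (x - P))) * w (t⁻¹ • (x - Q))| ≤
      A₂ * A₅ ^ q * A₅ * R ^ (-b) *
        ((1 + ‖x - P‖) ^ (-(b * q)) + (1 + ‖x - Q‖) ^ (-(b * q))) := by
  set X := 1 + ‖x - P‖
  set Y := 1 + ‖x - Q‖
  have hX : 0 < X := by positivity
  have hY : 0 < Y := by positivity
  have hw_upper : ∀ x, w x ≤ A₅ * (1 + ‖x‖) ^ (-b) := fun x ↦ (hw x).2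
  have hP := apply_inv_smul_le_of_decay hA₅ hb hw_upper hs hs1 (x - P)
  have hQ := apply_inv_smul_le_of_decay hA₅ hb hw_upper ht ht1 (x - Q)
  have hfP : |f (w (s⁻¹ • (x - P)))| ≤ A₂ * (A₅ ^ q * X ^ (-(b * q))) := by
    refine (hf _).trans (mul_le_mul_of_nonneg_left ?_ hA₂)
    rw [abs_of_nonneg (hw _).1]
    exact rpow_le_of_le_mul_rpow_neg (hw _).1 hA₅ hX (by linarith) hP
  have hRXY : R ≤ max X Y := by
    have := norm_sub_le_norm_sub_add_norm_sub P x Q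
    rw [norm_sub_rev P x] at this
    linarith [le_max_left X Y, le_max_right X Y]
  calc |f (w (s⁻¹ • (x - P))) * w (t⁻¹ • (x - Q))|
      = |f (w (s⁻¹ • (x - P)))| * w (t⁻¹ • (x - Q)) := by rw [abs_mul, abs_of_nonneg (hw _).1]
    _ ≤ A₂ * (A₅ ^ q * X ^ (-(b * q))) * (A₅ * Y ^ (-b)) :=
        mul_le_mul hfP hQ (hw _).1 (by positivity)
    _ = A₂ * A₅ ^ q * A₅ * (X ^ (-(b * q)) * Y ^ (-b)) := by ring
    _ ≤ A₂ * A₅ ^ q * A₅ * (R ^ (-b) * (X ^ (-(b * q)) + Y ^ (-(b * q)))) := by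
        refine mul_le_mul_of_nonneg_left ?_ (by positivity)
        exact rpow_neg_mul_rpow_neg_le_of_le_max hX hY hR hRXY hb (le_mul_of_one_le_right hb hq)
    _ = _ := by ring

variable [FiniteDimensional ℝ E] [MeasurableSpace E] [BorelSpace E] (μ : Measure E)
  [μ.IsAddHaarMeasure]

theorem integral_mul_le_of_rpow_bound_of_decay (hq : 1 ≤ q) (hb : 0 ≤ b)
    (hdim : (Module.finrank ℝ E : ℝ) < b * q) (hA₂ : 0 ≤ A₂)
    (hA₅ : 0 ≤ A₅) (hf : ∀ s, |f s| ≤ A₂ * |s| ^ q)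
    (hw : ∀ x, 0 ≤ w x ∧ w x ≤ A₅ * (1 + ‖x‖) ^ (-b)) (hR : 0 < R) (hPQ : 2 * R ≤ ‖P - Q‖)
    (hs : 0 < s) (hs1 : s ≤ 1) (ht : 0 < t) (ht1 : t ≤ 1) :
    ∫ x, f (w (s⁻¹ • (x - P))) * w (t⁻¹ • (x - Q)) ∂μ ≤
      2 * A₂ * A₅ ^ q * A₅ * (∫ x, (1 + ‖x‖) ^ (-(b * q)) ∂μ) * R ^ (-b) := by
  have := integral_le_of_abs_le_add_translates (integrable_one_add_norm (μ := μ) hdim)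
    (abs_mul_le_of_rpow_bound_of_decay hq hb hA₂ hA₅ hf hw hR hPQ hs hs1 ht ht1)
  linarith

end Interaction

theorem stmt8_general (N : ℕ) (hN : 3 ≤ N) (p : ℝ) (hp : p = 2 * N / ((N : ℝ) - 2))
    (A₂ A₅ : ℝ) (hA₂ : 0 < A₂) (hA₅ : 0 < A₅)
    (f : ℝ → ℝ) (hf : ∀ s : ℝ, |f s| ≤ A₂ * |s| ^ (p - 1))
    (w : EuclideanSpace ℝ (Fin N) → ℝ)
    (hw : ∀ x, 0 ≤ w x ∧ w x ≤ A₅ * (1 + ‖x‖) ^ (-((N : ℝ) - 2)))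
    (y₀ : EuclideanSpace ℝ (Fin N)) :
    ∃ C > 0, ∀ R : ℝ, 1 ≤ R → ∀ y : EuclideanSpace ℝ (Fin N), ‖y - y₀‖ = 2 →
      ∀ l : ℝ, 0 ≤ l → l ≤ 1 →
        ∫ x, f (if l = 0 then 0 else w (l⁻¹ • (x - R • y₀)))
              * (if l = 1 then 0 else w ((1 - l)⁻¹ • (x - R • y)))
          ≤ C * R ^ (-((N : ℝ) - 2)) := by
  have hb : (0 : ℝ) < N - 2 := by
    have : (3 : ℝ) ≤ N := by exact_mod_cast hN
    linarith
  have hq : p - 1 = (N + 2) / (N - 2) := by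
    rw [hp]; field_simp; ring
  have hq1 : 1 ≤ p - 1 := by
    rw [hq, one_le_div hb]; linarith
  have hdim : (Module.finrank ℝ (EuclideanSpace ℝ (Fin N)) : ℝ) < (N - 2) * (p - 1) := by
    rw [finrank_euclideanSpace_fin, hq, mul_div_cancel₀ _ hb.ne']; linarith
  set I := ∫ x : EuclideanSpace ℝ (Fin N), (1 + ‖x‖) ^ (-((N - 2) * (p - 1)))
  have hI : 0 ≤ I := integral_nonneg fun x ↦ by positivity
  set C := 2 * A₂ * A₅ ^ (p - 1) * A₅ * I + 1
  have hC : 0 < C := by positivity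
  refine ⟨C, hC, fun R hR y hy l hl0 hl1 ↦ ?_⟩
  have hCR : 0 ≤ C * R ^ (-((N : ℝ) - 2)) := mul_nonneg hC.le (by positivity)
  have hf0 : f 0 = 0 := by
    simpa [zero_rpow (by linarith : p - 1 ≠ 0)] using hf 0
  rcases hl0.eq_or_lt with rfl | hl0
  · simpa [hf0] using hCR
  rcases hl1.eq_or_lt with rfl | hl1
  · simpa using hCR
  have hPQ : 2 * R ≤ ‖R • y₀ - R • y‖ := by
    rw [← smul_sub, norm_smul, norm_sub_rev, hy, Real.norm_of_nonneg (by linarith)]; linarith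
  simp only [hl0.ne', hl1.ne, if_false]
  refine (integral_mul_le_of_rpow_bound_of_decay volume hq1 hb.le hdim hA₂.le hA₅.le hf hw
    (by linarith) hPQ hl0 hl1.le (sub_pos.mpr hl1) (by linarith)).trans ?_
  exact mul_le_mul_of_nonneg_right (lt_add_one _).le (by positivity)

/-- Upper bound on the interaction term `ε_λ^R = ∫ f(w₀) w_y`:
`ε_λ^R ≤ C R^{-(N-2)}` uniformly for `y ∈ ∂B₂(y₀)`, `λ ∈ [0,1]`, `R ≥ 1`,
with the convention `w₀ = 0` when `λ = 0` and `w_y = 0` when `λ = 1`. -/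
theorem stmt8 (N : ℕ) (hN : 3 ≤ N) (p : ℝ) (hp : p = 2 * N / ((N : ℝ) - 2))
    (A₂ A₅ : ℝ) (hA₂ : 0 < A₂) (hA₅ : 0 < A₅)
    (f : ℝ → ℝ) (hf : ∀ s : ℝ, |f s| ≤ A₂ * |s| ^ (p - 1))
    (w : EuclideanSpace ℝ (Fin N) → ℝ)
    (hw : ∀ x, 0 ≤ w x ∧ w x ≤ A₅ * (1 + ‖x‖) ^ (-((N : ℝ) - 2)))
    (y₀ : EuclideanSpace ℝ (Fin N)) (hy₀ : ‖y₀‖ = 1) :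
    ∃ C > 0, ∀ R : ℝ, 1 ≤ R → ∀ y : EuclideanSpace ℝ (Fin N), ‖y - y₀‖ = 2 →
      ∀ l : ℝ, 0 ≤ l → l ≤ 1 →
        ∫ x, f (if l = 0 then 0 else w (l⁻¹ • (x - R • y₀)))
              * (if l = 1 then 0 else w ((1 - l)⁻¹ • (x - R • y)))
          ≤ C * R ^ (-((N : ℝ) - 2)) :=
  stmt8_general N hN p hp A₂ A₅ hA₂ hA₅ f hf w hw y₀
end

section
/- Let w be continuous with A₄(1+|x|)^{−(N−2)} ≤ w(x) for all x, and suppose f is continuous with f(w(z)) ≥ c₀ > 0 for all z ∈ B₁(0). Then there exists C > 0 such that for all y ∈ ∂B₂(y₀), λ ∈ (0,1), and R ≥ 1, the interaction ε_λ^R = ∫ f(w((x−Ry₀)/λ)) w((x−Ry)/(1−λ)) dx satisfies ε_λ^R ≥ C λ₋^N R^{−(N−2)}, where λ₋ := min{λ, 1−λ}. -/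
open MeasureTheory Metric Real

/-!
On the ball `B_λ(R y₀)` the first factor of the integrand is at least `c₀`, since its argument
lies in `B₁(0)`, while `x - R y` has norm at most `3R` there, so the decay bound on `w` makes the
second factor at least `A₄ ((1 - λ) / 4R)^(N-2)`. Integrating over the ball, whose volume is a
multiple of `λ^N`, and using `λ₋ ≤ 2 λ (1 - λ)` gives the claim.
-/

lemma min_le_two_mul_mul_one_sub {l : ℝ} (h0 : 0 ≤ l) (h1 : l ≤ 1) :
    min l (1 - l) ≤ 2 * (l * (1 - l)) := by
  rcases le_total l (1 - l) with h | h
  · rw [min_eq_left h]; nlinarith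
  · rw [min_eq_right h]; nlinarith

lemma min_pow_le {l : ℝ} (h0 : 0 ≤ l) (h1 : l ≤ 1) (n : ℕ) :
    min l (1 - l) ^ (n + 2) ≤ 2 ^ n * (1 - l) ^ n * l ^ (n + 2) := by
  have hm0 : 0 ≤ min l (1 - l) := le_min h0 (by linarith)
  calc min l (1 - l) ^ (n + 2) = min l (1 - l) ^ n * min l (1 - l) ^ 2 := pow_add _ _ _
    _ ≤ (2 * (l * (1 - l))) ^ n * l ^ 2 := by
        gcongr
        · exact min_le_two_mul_mul_one_sub h0 h1
        · exact min_le_left _ _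
    _ = 2 ^ n * (1 - l) ^ n * l ^ (n + 2) := by rw [mul_pow, mul_pow]; ring

lemma min_pow_mul_rpow_neg_le {l R : ℝ} (hl0 : 0 < l) (hl1 : l < 1) (hR : 0 < R) (n : ℕ) :
    min l (1 - l) ^ (n + 2) * R ^ (-(n : ℝ)) / 8 ^ n
      ≤ (4 * R / (1 - l)) ^ (-(n : ℝ)) * l ^ (n + 2) := by
  have h1l : 0 < 1 - l := by linarith
  rw [rpow_neg hR.le, rpow_neg (by positivity), rpow_natCast, rpow_natCast, div_pow, inv_div,
    div_le_iff₀ (by positivity)]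
  calc min l (1 - l) ^ (n + 2) * (R ^ n)⁻¹
      ≤ 2 ^ n * (1 - l) ^ n * l ^ (n + 2) * (R ^ n)⁻¹ := by
        gcongr; exact min_pow_le hl0.le hl1.le n
    _ = (1 - l) ^ n / (4 * R) ^ n * l ^ (n + 2) * 8 ^ n := by
        rw [show (8 : ℝ) ^ n = 2 ^ n * 4 ^ n by rw [← mul_pow]; norm_num]
        field_simp
        ring

lemma mul_rpow_neg_le_of_one_add_norm_le {E : Type*} [NormedAddCommGroup E] {w : E → ℝ}
    {A s r : ℝ} (hA : 0 ≤ A) (hs : 0 ≤ s) (hw : ∀ x, A * (1 + ‖x‖) ^ (-s) ≤ w x) {u : E}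
    (hu : 1 + ‖u‖ ≤ r) : A * r ^ (-s) ≤ w u :=
  (mul_le_mul_of_nonneg_left
    (rpow_le_rpow_of_nonpos (by positivity) hu (neg_nonpos.mpr hs)) hA).trans (hw u)

lemma one_add_norm_smul_sub_le {E : Type*} [NormedAddCommGroup E] [NormedSpace ℝ E]
    {x y y₀ : E} {l R : ℝ} (hl1 : l < 1) (hR : 1 ≤ R) (hy : ‖y - y₀‖ = 2)
    (hx : x ∈ ball (R • y₀) l) :
    1 + ‖(1 - l)⁻¹ • (x - R • y)‖ ≤ 4 * R / (1 - l) := by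
  have hl0 : 0 < l := pos_of_mem_ball hx
  have h1l : 0 < 1 - l := by linarith
  have hxR : ‖x - R • y‖ ≤ 3 * R :=
    calc ‖x - R • y‖ ≤ ‖x - R • y₀‖ + ‖R • (y₀ - y)‖ := by
          rw [smul_sub]; exact norm_sub_le_norm_sub_add_norm_sub _ _ _
      _ ≤ l + R * 2 := by
          rw [norm_smul, norm_sub_rev y₀ y, hy, Real.norm_of_nonneg (by linarith)]
          linarith [mem_ball_iff_norm.mp hx]
      _ ≤ 3 * R := by linarith
  rw [norm_smul, norm_inv, Real.norm_of_nonneg h1l.le, inv_mul_eq_div, le_div_iff₀ h1l,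
    add_mul, div_mul_cancel₀ _ h1l.ne']
  nlinarith

lemma mul_measureReal_le_integral {α : Type*} [MeasurableSpace α] {μ : Measure α}
    {g : α → ℝ} {s : Set α} {k : ℝ} (hs : MeasurableSet s) (hμs : μ s ≠ ⊤)
    (hg : Integrable g μ) (hg0 : 0 ≤ g) (hk : ∀ x ∈ s, k ≤ g x) :
    k * μ.real s ≤ ∫ x, g x ∂μ :=
  (setIntegral_ge_of_const_le_real hs hμs hk hg.integrableOn).trans
    (setIntegral_le_integral hg (ae_of_all _ hg0))

lemma measureReal_ball_euclideanSpace {n : ℕ} (c : EuclideanSpace ℝ (Fin n)) {r : ℝ}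
    (hr : 0 < r) :
    volume.real (ball c r) = r ^ n * volume.real (ball (0 : EuclideanSpace ℝ (Fin n)) 1) := by
  rw [measureReal_def, Measure.addHaar_ball_of_pos _ _ hr, ENNReal.toReal_mul,
    ENNReal.toReal_ofReal (by positivity), finrank_euclideanSpace_fin, measureReal_def]

theorem stmt9_general (N : ℕ) (hN : 3 ≤ N)
    (A₄ c₀ : ℝ) (hA₄ : 0 < A₄) (hc₀ : 0 < c₀)
    (w : EuclideanSpace ℝ (Fin N) → ℝ)
    (hwlb : ∀ x, A₄ * (1 + ‖x‖) ^ (-((N : ℝ) - 2)) ≤ w x)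
    (f : ℝ → ℝ) (hf0 : ∀ s : ℝ, 0 ≤ s → 0 ≤ f s)
    (hfw : ∀ z ∈ Metric.ball (0 : EuclideanSpace ℝ (Fin N)) 1, c₀ ≤ f (w z))
    (y₀ : EuclideanSpace ℝ (Fin N))
    (hInt : ∀ (R : ℝ), 1 ≤ R → ∀ (y : EuclideanSpace ℝ (Fin N)), ‖y - y₀‖ = 2 →
      ∀ l : ℝ, 0 < l → l < 1 →
        Integrable (fun x =>
          f (w (l⁻¹ • (x - R • y₀))) * w ((1 - l)⁻¹ • (x - R • y))) volume) :
    ∃ C > 0, ∀ R : ℝ, 1 ≤ R → ∀ y : EuclideanSpace ℝ (Fin N), ‖y - y₀‖ = 2 →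
      ∀ l : ℝ, 0 < l → l < 1 →
        C * (min l (1 - l)) ^ N * R ^ (-((N : ℝ) - 2))
          ≤ ∫ x, f (w (l⁻¹ • (x - R • y₀))) * w ((1 - l)⁻¹ • (x - R • y)) := by
  obtain ⟨n, rfl⟩ : ∃ n, N = n + 2 := ⟨N - 2, by omega⟩
  have hexp : ((n + 2 : ℕ) : ℝ) - 2 = n := by push_cast; ring
  rw [hexp] at hwlb ⊢
  set v := volume.real (ball (0 : EuclideanSpace ℝ (Fin (n + 2))) 1)
  have hv : 0 < v :=
    ENNReal.toReal_pos (measure_ball_pos volume 0 one_pos).ne' measure_ball_lt_top.ne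
  refine ⟨c₀ * A₄ * v / 8 ^ n, by positivity, fun R hR y hy l hl0 hl1 => ?_⟩
  have hw0 : ∀ x, 0 ≤ w x := fun x => (mul_pos hA₄ (by positivity)).le.trans (hwlb x)
  have hbound : ∀ x ∈ ball (R • y₀) l, c₀ * (A₄ * (4 * R / (1 - l)) ^ (-(n : ℝ)))
      ≤ f (w (l⁻¹ • (x - R • y₀))) * w ((1 - l)⁻¹ • (x - R • y)) := by
    intro x hx
    have hz : l⁻¹ • (x - R • y₀) ∈ ball 0 1 := by
      rw [mem_ball_zero_iff, norm_smul, norm_inv, Real.norm_of_nonneg hl0.le, inv_mul_lt_one₀ hl0]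
      exact mem_ball_iff_norm.mp hx
    exact mul_le_mul (hfw _ hz) (mul_rpow_neg_le_of_one_add_norm_le hA₄.le n.cast_nonneg hwlb
      (one_add_norm_smul_sub_le hl1 hR hy hx)) (by positivity) (hf0 _ (hw0 _))
  calc c₀ * A₄ * v / 8 ^ n * min l (1 - l) ^ (n + 2) * R ^ (-(n : ℝ))
      = c₀ * A₄ * v * (min l (1 - l) ^ (n + 2) * R ^ (-(n : ℝ)) / 8 ^ n) := by ring
    _ ≤ c₀ * A₄ * v * ((4 * R / (1 - l)) ^ (-(n : ℝ)) * l ^ (n + 2)) := by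
        gcongr; exact min_pow_mul_rpow_neg_le hl0 hl1 (by linarith) n
    _ = c₀ * (A₄ * (4 * R / (1 - l)) ^ (-(n : ℝ))) * volume.real (ball (R • y₀) l) := by
        rw [measureReal_ball_euclideanSpace _ hl0]; ring
    _ ≤ _ := mul_measureReal_le_integral measurableSet_ball measure_ball_lt_top.ne
        (hInt R hR y hy l hl0 hl1) (fun x => mul_nonneg (hf0 _ (hw0 _)) (hw0 _)) hbound

/-- Lower bound for the interaction term (Lemma 5.4):
`ε_λ^R ≥ C λ₋^N R^{-(N-2)}` with `λ₋ = min{λ, 1-λ}`, for all `y ∈ ∂B₂(y₀)`,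
`λ ∈ (0,1)` and `R ≥ 1`. -/
theorem stmt9 (N : ℕ) (hN : 3 ≤ N)
    (A₄ c₀ : ℝ) (hA₄ : 0 < A₄) (hc₀ : 0 < c₀)
    (w : EuclideanSpace ℝ (Fin N) → ℝ) (hwc : Continuous w)
    (hwlb : ∀ x, A₄ * (1 + ‖x‖) ^ (-((N : ℝ) - 2)) ≤ w x)
    (f : ℝ → ℝ) (hfc : Continuous f) (hf0 : ∀ s : ℝ, 0 ≤ s → 0 ≤ f s)
    (hfw : ∀ z ∈ Metric.ball (0 : EuclideanSpace ℝ (Fin N)) 1, c₀ ≤ f (w z))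
    (y₀ : EuclideanSpace ℝ (Fin N)) (hy₀ : ‖y₀‖ = 1)
    (hInt : ∀ (R : ℝ), 1 ≤ R → ∀ (y : EuclideanSpace ℝ (Fin N)), ‖y - y₀‖ = 2 →
      ∀ l : ℝ, 0 < l → l < 1 →
        Integrable (fun x =>
          f (w (l⁻¹ • (x - R • y₀))) * w ((1 - l)⁻¹ • (x - R • y))) volume) :
    ∃ C > 0, ∀ R : ℝ, 1 ≤ R → ∀ y : EuclideanSpace ℝ (Fin N), ‖y - y₀‖ = 2 →
      ∀ l : ℝ, 0 < l → l < 1 →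
        C * (min l (1 - l)) ^ N * R ^ (-((N : ℝ) - 2))
          ≤ ∫ x, f (w (l⁻¹ • (x - R • y₀))) * w ((1 - l)⁻¹ • (x - R • y)) :=
  stmt9_general N hN A₄ c₀ hA₄ hc₀ w hwlb f hf0 hfw y₀ hInt
end

section
/- Let w ∈ C¹(ℝ^N) satisfy |∇w(x)| ≤ A₆(1+|x|)^{−(N−1)}. For λ ∈ (0,1), set w₀(x) = w((x−Ry₀)/λ) and w_y(x) = w((x−Ry)/(1−λ)) with |y₀| = 1, y ∈ ∂B₂(y₀). Then there exists C = C(λ) > 0 such that ∫_{ℝ^N} ∇w₀ · ∇w_y dx ≤ C R^{−(N−2)} for all R ≥ 1. -/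
open MeasureTheory Real Filter
open scoped Topology RealInnerProductSpace

/-!
With `a = R • y₀` and `b = R • y`, so that `‖a - b‖ = 2R`, the two gradients are bounded by
multiples of `(1 + ‖x - a‖) ^ (-(N-1))` and `(1 + ‖x - b‖) ^ (-(N-1))`. The larger of `‖x - a‖`
and `‖x - b‖` is at least `R`, so the product of these profiles is dominated by
`g ‖x - a‖ + g ‖x - b‖` with `g r = (1 + r) ^ (-(N-1)) * (1 + max R r) ^ (-(N-1))`.
In polar coordinates `r ^ (N-1) * g r ≤ max R r ^ (-(N-1))`, whose integral over `(0, ∞)` is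
`(N-1)/(N-2) * R ^ (-(N-2))`.
-/

open Set Metric Module

section Gradient

variable {E : Type*} [NormedAddCommGroup E] [InnerProductSpace ℝ E] [CompleteSpace E]

theorem gradient_comp_smul_sub {w : E → ℝ} (hw : Differentiable ℝ w) (c : ℝ) (v x : E) :
    gradient (fun z => w (c • (z - v))) x = c • gradient w (c • (x - v)) := by
  have hT : HasFDerivAt (fun z : E => c • (z - v)) (c • ContinuousLinearMap.id ℝ E) x :=
    ((hasFDerivAt_id x).sub_const v).const_smul c
  have hcomp := (hw (c • (x - v))).hasGradientAt.hasFDerivAt.comp x hT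
  have hL : (InnerProductSpace.toDual ℝ E (gradient w (c • (x - v)))).comp
      (c • ContinuousLinearMap.id ℝ E) =
        InnerProductSpace.toDual ℝ E (c • gradient w (c • (x - v))) := by
    ext z
    simp
  exact (hasGradientAt_iff_hasFDerivAt.2 (hL ▸ hcomp)).gradient

theorem norm_gradient_comp_smul_sub_le {w : E → ℝ} (hw : Differentiable ℝ w) {A p c : ℝ}
    (hA : 0 ≤ A) (hp : 0 ≤ p) (hc : 1 ≤ c)
    (hgrad : ∀ x, ‖gradient w x‖ ≤ A * (1 + ‖x‖) ^ (-p)) (v x : E) :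
    ‖gradient (fun z => w (c • (z - v))) x‖ ≤ c * A * (1 + ‖x - v‖) ^ (-p) := by
  have hdil : ‖x - v‖ ≤ ‖c • (x - v)‖ := by
    rw [norm_smul, norm_of_nonneg (by linarith)]
    exact le_mul_of_one_le_left (norm_nonneg _) hc
  rw [gradient_comp_smul_sub hw, norm_smul, norm_of_nonneg (by linarith), mul_assoc]
  gcongr
  refine (hgrad _).trans (mul_le_mul_of_nonneg_left ?_ hA)
  exact rpow_le_rpow_of_nonpos (by positivity) (by linarith) (by linarith)

end Gradient

theorem integral_le_integral_of_le_of_nonneg {α : Type*} [MeasurableSpace α] {μ : Measure α}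
    {f g : α → ℝ} (hg : Integrable g μ) (hg0 : 0 ≤ g) (hfg : f ≤ g) :
    ∫ x, f x ∂μ ≤ ∫ x, g x ∂μ := by
  by_cases hf : Integrable f μ
  · exact integral_mono hf hg hfg
  · rw [integral_undef hf]
    exact integral_nonneg hg0

theorem mul_le_add_mul_max_of_antitoneOn {f : ℝ → ℝ} (hf : AntitoneOn f (Ici 0))
    (hf0 : ∀ r, 0 ≤ r → 0 ≤ f r) {ρ s t : ℝ} (hs : 0 ≤ s) (ht : 0 ≤ t) (hst : 2 * ρ ≤ s + t) :
    f s * f t ≤ f s * f (max ρ s) + f t * f (max ρ t) := by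
  wlog hle : s ≤ t generalizing s t
  · rw [mul_comm, add_comm]
    exact this ht hs (by linarith) (by linarith)
  have hmax : max ρ s ≤ t := max_le (by linarith) hle
  have hft : f t ≤ f (max ρ s) := hf (hs.trans (le_max_right ρ s)) (hs.trans hle) hmax
  calc f s * f t ≤ f s * f (max ρ s) := mul_le_mul_of_nonneg_left hft (hf0 s hs)
    _ ≤ f s * f (max ρ s) + f t * f (max ρ t) :=
      le_add_of_nonneg_right (mul_nonneg (hf0 t ht) (hf0 _ (ht.trans (le_max_right ρ t))))

theorem rpow_mul_one_add_rpow_neg_le_one {r p : ℝ} (hr : 0 ≤ r) (hp : 0 ≤ p) :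
    r ^ p * (1 + r) ^ (-p) ≤ 1 := by
  rw [rpow_neg (by linarith), ← div_eq_mul_inv, div_le_one (by positivity)]
  exact rpow_le_rpow hr (by linarith) hp

theorem integrableOn_Ioi_max_rpow_neg {ρ p : ℝ} (hρ : 0 < ρ) (hp : 1 < p) :
    IntegrableOn (fun r => max ρ r ^ (-p)) (Ioi 0) := by
  rw [← Ioc_union_Ioi_eq_Ioi hρ.le]
  refine IntegrableOn.union ?_ ?_
  · refine (integrableOn_const (C := ρ ^ (-p)) measure_Ioc_lt_top.ne).congr_fun
      (fun r hr => ?_) measurableSet_Ioc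
    rw [max_eq_left hr.2]
  · refine (integrableOn_Ioi_rpow_of_lt (a := -p) (by linarith) hρ).congr_fun
      (fun r hr => ?_) measurableSet_Ioi
    rw [max_eq_right (le_of_lt hr)]

theorem integral_Ioi_max_rpow_neg {ρ p : ℝ} (hρ : 0 < ρ) (hp : 1 < p) :
    ∫ r in Ioi 0, max ρ r ^ (-p) = p / (p - 1) * ρ ^ (1 - p) := by
  have hint := integrableOn_Ioi_max_rpow_neg hρ hp
  rw [← Ioc_union_Ioi_eq_Ioi hρ.le] at hint ⊢
  rw [setIntegral_union Ioc_disjoint_Ioi_same measurableSet_Ioi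
      (hint.mono_set subset_union_left) (hint.mono_set subset_union_right),
    setIntegral_congr_fun measurableSet_Ioc (g := fun _ => ρ ^ (-p))
      (fun r hr => by rw [max_eq_left hr.2]),
    setIntegral_congr_fun measurableSet_Ioi (g := fun r => r ^ (-p))
      (fun r hr => by rw [max_eq_right (le_of_lt hr)]),
    setIntegral_const, integral_Ioi_rpow_of_lt (by linarith) hρ, Real.volume_real_Ioc_of_le hρ.le]
  have hρp : ρ * ρ ^ (-p) = ρ ^ (1 - p) := by
    rw [sub_eq_add_neg, rpow_add hρ, rpow_one]
  rw [smul_eq_mul, sub_zero, hρp, show -p + 1 = 1 - p by ring]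
  have hp₁ : p - 1 ≠ 0 := by linarith
  have hp₂ : 1 - p ≠ 0 := by linarith
  field_simp
  ring

section Radial

variable {E : Type*} [NormedAddCommGroup E] [NormedSpace ℝ E] [FiniteDimensional ℝ E]
  [MeasurableSpace E] [BorelSpace E] [Nontrivial E] (μ : Measure E) [μ.IsAddHaarMeasure]
  {g h : ℝ → ℝ}

theorem integrable_fun_norm_of_le (hg : Measurable g) (hg0 : ∀ r > 0, 0 ≤ g r)
    (hh : IntegrableOn h (Ioi 0)) (hgh : ∀ r > 0, r ^ (finrank ℝ E - 1) * g r ≤ h r) :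
    Integrable (fun x => g ‖x‖) μ := by
  rw [integrable_fun_norm_addHaar μ]
  refine hh.mono' (by fun_prop) ((ae_restrict_iff' measurableSet_Ioi).2 (ae_of_all _ ?_))
  intro r (hr : 0 < r)
  rw [smul_eq_mul, norm_of_nonneg (mul_nonneg (by positivity) (hg0 r hr))]
  exact hgh r hr

theorem integral_fun_norm_le (hg : Measurable g) (hg0 : ∀ r > 0, 0 ≤ g r)
    (hh : IntegrableOn h (Ioi 0)) (hgh : ∀ r > 0, r ^ (finrank ℝ E - 1) * g r ≤ h r) :
    ∫ x, g ‖x‖ ∂μ ≤ finrank ℝ E * μ.real (ball 0 1) * ∫ r in Ioi 0, h r := by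
  have hint : IntegrableOn (fun r : ℝ => r ^ (finrank ℝ E - 1) • g r) (Ioi 0) :=
    (integrable_fun_norm_addHaar μ).1 (integrable_fun_norm_of_le μ hg hg0 hh hgh)
  rw [integral_fun_norm_addHaar μ, nsmul_eq_mul, smul_eq_mul, ← mul_assoc]
  exact mul_le_mul_of_nonneg_left (setIntegral_mono_on hint hh measurableSet_Ioi hgh)
    (by positivity)

end Radial

theorem integral_one_add_norm_sub_rpow_mul_le {E : Type*} [NormedAddCommGroup E]
    [NormedSpace ℝ E] [FiniteDimensional ℝ E] [MeasurableSpace E] [BorelSpace E]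
    (μ : Measure E) [μ.IsAddHaarMeasure] {n : ℕ} (hn : finrank ℝ E = n) (h2n : 2 < n)
    {ρ : ℝ} (hρ : 0 < ρ) {a b : E} (hab : 2 * ρ ≤ ‖a - b‖) :
    Integrable (fun x => (1 + ‖x - a‖) ^ (-((n : ℝ) - 1)) * (1 + ‖x - b‖) ^ (-((n : ℝ) - 1))) μ ∧
      ∫ x, (1 + ‖x - a‖) ^ (-((n : ℝ) - 1)) * (1 + ‖x - b‖) ^ (-((n : ℝ) - 1)) ∂μ
        ≤ 2 * n * μ.real (ball 0 1) * (((n : ℝ) - 1) / ((n : ℝ) - 2)) * ρ ^ (-((n : ℝ) - 2)) := by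
  have : Nontrivial E := Module.nontrivial_of_finrank_pos (R := ℝ) (by omega)
  set p : ℝ := (n : ℝ) - 1 with hp_def
  have hp : 1 < p := by
    have : (2 : ℝ) < n := by exact_mod_cast h2n
    linarith
  set f : ℝ → ℝ := fun r => (1 + r) ^ (-p)
  set g : ℝ → ℝ := fun r => f r * f (max ρ r)
  have hf0 : ∀ r, 0 ≤ r → 0 ≤ f r := fun r hr => by positivity
  have hf : AntitoneOn f (Ici 0) := fun s (hs : 0 ≤ s) t _ hst =>
    rpow_le_rpow_of_nonpos (by linarith) (by linarith) (by linarith)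
  have hg0 : ∀ r > 0, 0 ≤ g r := fun r hr =>
    mul_nonneg (hf0 r hr.le) (hf0 _ (hr.le.trans (le_max_right ρ r)))
  have hgh : ∀ r > 0, r ^ (finrank ℝ E - 1) * g r ≤ max ρ r ^ (-p) := by
    intro r hr
    have hrp : r ^ (finrank ℝ E - 1) = r ^ p := by
      rw [hn, ← rpow_natCast, Nat.cast_sub (by omega), Nat.cast_one]
    have hmax : 0 < max ρ r := lt_max_of_lt_left hρ
    calc r ^ (finrank ℝ E - 1) * g r = (r ^ p * f r) * f (max ρ r) := by rw [hrp]; ring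
      _ ≤ 1 * f (max ρ r) := by
        gcongr
        exact rpow_mul_one_add_rpow_neg_le_one hr.le (by linarith)
      _ ≤ max ρ r ^ (-p) := by
        rw [one_mul]
        exact rpow_le_rpow_of_nonpos hmax (by linarith) (by linarith)
  have hgi : Integrable (fun x => g ‖x‖) μ :=
    integrable_fun_norm_of_le μ (by fun_prop) hg0 (integrableOn_Ioi_max_rpow_neg hρ hp) hgh
  have hga := hgi.comp_sub_right a
  have hgb := hgi.comp_sub_right b
  have hmaj : ∀ x, f ‖x - a‖ * f ‖x - b‖ ≤ g ‖x - a‖ + g ‖x - b‖ := fun x =>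
    mul_le_add_mul_max_of_antitoneOn hf hf0 (norm_nonneg _) (norm_nonneg _)
      (hab.trans (norm_sub_le_norm_sub_add_norm_sub a x b |>.trans_eq (by rw [norm_sub_rev])))
  have hprod : Integrable (fun x => f ‖x - a‖ * f ‖x - b‖) μ :=
    (hga.add hgb).mono' (by fun_prop) (ae_of_all _ fun x => by
      rw [norm_of_nonneg (mul_nonneg (hf0 _ (norm_nonneg _)) (hf0 _ (norm_nonneg _)))]
      exact hmaj x)
  refine ⟨hprod, ?_⟩
  calc ∫ x, f ‖x - a‖ * f ‖x - b‖ ∂μ ≤ ∫ x, (g ‖x - a‖ + g ‖x - b‖) ∂μ :=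
        integral_mono hprod (hga.add hgb) hmaj
    _ = 2 * ∫ x, g ‖x‖ ∂μ := by
        rw [integral_add hga hgb, integral_sub_right_eq_self (fun x => g ‖x‖),
          integral_sub_right_eq_self (fun x => g ‖x‖)]
        ring
    _ ≤ 2 * (finrank ℝ E * μ.real (ball 0 1) * ∫ r in Ioi 0, max ρ r ^ (-p)) := by
        gcongr
        exact integral_fun_norm_le μ (by fun_prop) hg0 (integrableOn_Ioi_max_rpow_neg hρ hp) hgh
    _ = 2 * n * μ.real (ball 0 1) * (((n : ℝ) - 1) / ((n : ℝ) - 2)) * ρ ^ (-((n : ℝ) - 2)) := by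
        rw [integral_Ioi_max_rpow_neg hρ hp, hn, hp_def,
          show (1 : ℝ) - ((n : ℝ) - 1) = -((n : ℝ) - 2) by ring,
          show (n : ℝ) - 1 - 1 = (n : ℝ) - 2 by ring]
        ring

theorem stmt10_general (N : ℕ) (hN : 3 ≤ N)
    (A₆ : ℝ) (hA₆ : 0 < A₆)
    (w : EuclideanSpace ℝ (Fin N) → ℝ) (hw : ContDiff ℝ 1 w)
    (hgrad : ∀ x, ‖gradient w x‖ ≤ A₆ * (1 + ‖x‖) ^ (-((N : ℝ) - 1)))
    (y₀ : EuclideanSpace ℝ (Fin N))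
    (l : ℝ) (hl0 : 0 < l) (hl1 : l < 1) :
    ∃ C > 0, ∀ R : ℝ, 1 ≤ R → ∀ y : EuclideanSpace ℝ (Fin N), ‖y - y₀‖ = 2 →
      ∫ x, ⟪gradient (fun z => w (l⁻¹ • (z - R • y₀))) x,
            gradient (fun z => w ((1 - l)⁻¹ • (z - R • y))) x⟫
        ≤ C * R ^ (-((N : ℝ) - 2)) := by
  have hwd : Differentiable ℝ w := hw.differentiable one_ne_zero
  have hp : 0 ≤ (N : ℝ) - 1 := by
    have : (3 : ℝ) ≤ N := by exact_mod_cast hN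
    linarith
  have hl : 1 ≤ l⁻¹ := (one_le_inv₀ hl0).2 hl1.le
  have hl' : 1 ≤ (1 - l)⁻¹ := (one_le_inv₀ (by linarith)).2 (by linarith)
  set K := l⁻¹ * A₆ * ((1 - l)⁻¹ * A₆)
  set C₀ := 2 * N * volume.real (ball (0 : EuclideanSpace ℝ (Fin N)) 1) *
    (((N : ℝ) - 1) / ((N : ℝ) - 2))
  refine ⟨max (K * C₀) 1, lt_max_of_lt_right one_pos, fun R hR y hy => ?_⟩
  have hab : 2 * R ≤ ‖R • y₀ - R • y‖ := by
    rw [← smul_sub, norm_smul, norm_sub_rev, hy, norm_of_nonneg (by linarith), mul_comm]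
  obtain ⟨hint, hle⟩ := integral_one_add_norm_sub_rpow_mul_le volume finrank_euclideanSpace_fin
    (by omega) (by linarith) hab
  have hpt : ∀ x, ⟪gradient (fun z => w (l⁻¹ • (z - R • y₀))) x,
      gradient (fun z => w ((1 - l)⁻¹ • (z - R • y))) x⟫ ≤
      K * ((1 + ‖x - R • y₀‖) ^ (-((N : ℝ) - 1)) * (1 + ‖x - R • y‖) ^ (-((N : ℝ) - 1))) := by
    intro x
    refine (real_inner_le_norm _ _).trans ?_
    rw [mul_mul_mul_comm]
    exact mul_le_mul (norm_gradient_comp_smul_sub_le hwd hA₆.le hp hl hgrad _ x)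
      (norm_gradient_comp_smul_sub_le hwd hA₆.le hp hl' hgrad _ x) (norm_nonneg _)
      (by positivity)
  calc _ ≤ ∫ x, K * ((1 + ‖x - R • y₀‖) ^ (-((N : ℝ) - 1)) *
          (1 + ‖x - R • y‖) ^ (-((N : ℝ) - 1))) :=
        integral_le_integral_of_le_of_nonneg (hint.const_mul K) (fun x => by positivity) hpt
    _ ≤ K * (C₀ * R ^ (-((N : ℝ) - 2))) := by
        rw [integral_const_mul]
        gcongr
    _ ≤ max (K * C₀) 1 * R ^ (-((N : ℝ) - 2)) := by
        rw [← mul_assoc]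
        gcongr
        exact le_max_left _ _

/-- Interaction of the gradients of two translated and dilated solitons
(Lemma on `∫ ∇w₀ · ∇w_y ≤ C R^{-(N-2)}`). -/
theorem stmt10 (N : ℕ) (hN : 3 ≤ N)
    (A₆ : ℝ) (hA₆ : 0 < A₆)
    (w : EuclideanSpace ℝ (Fin N) → ℝ) (hw : ContDiff ℝ 1 w)
    (hgrad : ∀ x, ‖gradient w x‖ ≤ A₆ * (1 + ‖x‖) ^ (-((N : ℝ) - 1)))
    (y₀ : EuclideanSpace ℝ (Fin N)) (hy₀ : ‖y₀‖ = 1)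
    (l : ℝ) (hl0 : 0 < l) (hl1 : l < 1) :
    ∃ C > 0, ∀ R : ℝ, 1 ≤ R → ∀ y : EuclideanSpace ℝ (Fin N), ‖y - y₀‖ = 2 →
      ∫ x, ⟪gradient (fun z => w (l⁻¹ • (z - R • y₀))) x,
            gradient (fun z => w ((1 - l)⁻¹ • (z - R • y))) x⟫
        ≤ C * R ^ (-((N : ℝ) - 2)) :=
  stmt10_general N hN A₆ hA₆ w hw hgrad y₀ l hl0 hl1
end

section
/- Let f ∈ C¹([0,∞)) ∩ C³((0,∞)), extended oddly to ℝ, satisfy |f^{(i)}(s)| ≤ A₂|s|^{2*−(i+1)} for i = −1,0,1,2,3 (with f^{(−1)} = F). Then there exists σ ∈ (1/2, 1], namely σ = min{2*/4, 1}, with the property: for any C₅ ≥ 1 there is C₆ > 0 such that |f(u+v) − f(u) − f(v)| ≤ C₆|uv|^σ and |F(u+v) − F(u) − F(v) − f(u)v − f(v)u| ≤ C₆|uv|^{2σ} for all u, v ∈ ℝ with |u|, |v| ≤ C₅. -/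
open Real Set

/-!
Oddness turns one-sided differentiability on `[0, ∞)` into differentiability on `ℝ`, with
`|f'(s)| ≤ A₂ |s|^(2* - 2)`. For `|v| ≤ |u|`, the mean value theorem applied to
`t ↦ f(u + t) - f(t)` gives `|f(u+v) - f(u) - f(v)| ≲ |u|^(2*-2) |v|`, and applied to
`t ↦ F(u + t) - F(t) - f(u) t - u f(t)` gives
`|F(u+v) - F(u) - F(v) - f(u) v - f(v) u| ≲ (|u|^(2*-2) |v| + |u| |v|^(2*-2)) |v|`.
On a bounded set these monomials are dominated by `|uv|^σ` and `|uv|^(2σ)`, because `σ ≤ 1` and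
`4σ ≤ 2*`.
-/

theorem Function.Odd.differentiable_of_differentiableOn_Ici {E : Type*} [NormedAddCommGroup E]
    [NormedSpace ℝ E] {f : ℝ → E} (hodd : f.Odd) (hf : DifferentiableOn ℝ f (Ici 0)) :
    Differentiable ℝ f := by
  have hreflect : (fun y => -f (-y)) = f := funext fun y => by rw [hodd y, neg_neg]
  intro x
  rcases lt_trichotomy x 0 with hx | rfl | hx
  · rw [← hreflect]
    exact (differentiableAt_comp_neg.2 (hf.differentiableAt (Ici_mem_nhds (neg_pos.2 hx)))).neg
  · set d := derivWithin f (Ici 0) 0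
    have hright : HasDerivWithinAt f d (Ici 0) 0 := (hf 0 self_mem_Ici).hasDerivWithinAt
    have hleft : HasDerivWithinAt f d (Iic 0) 0 := by
      have hneg : HasDerivWithinAt f d (Ici 0) (-0) := by rwa [neg_zero]
      have h := (hneg.scomp 0 (hasDerivWithinAt_neg 0 (Iic 0)) fun y hy => neg_nonneg.2 hy).neg
      rw [neg_one_smul, neg_neg] at h
      convert h using 1
      exact hreflect.symm
    have := hleft.union hright
    rw [Iic_union_Ici, hasDerivWithinAt_univ] at this
    exact this.differentiableAt
  · exact hf.differentiableAt (Ici_mem_nhds hx)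

theorem rpow_mul_rpow_le_rpow_add {m M C a b : ℝ} (hm : 0 < m) (hmM : m ≤ M) (hMC : M ≤ C)
    (hb : 0 ≤ b) (hab : 0 ≤ a + b) : M ^ a * m ^ b ≤ C ^ (a + b) := by
  have hM : 0 < M := hm.trans_le hmM
  rcases le_or_gt 0 a with ha | ha
  · calc M ^ a * m ^ b ≤ C ^ a * C ^ b :=
          mul_le_mul (rpow_le_rpow hM.le hMC ha) (rpow_le_rpow hm.le (hmM.trans hMC) hb)
            (by positivity) (rpow_nonneg (hM.le.trans hMC) a)
      _ = C ^ (a + b) := (rpow_add (hM.trans_le hMC) a b).symm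
  · calc M ^ a * m ^ b ≤ m ^ a * m ^ b :=
          mul_le_mul_of_nonneg_right (rpow_le_rpow_of_nonpos hm hmM ha.le) (by positivity)
      _ = m ^ (a + b) := (rpow_add hm a b).symm
      _ ≤ C ^ (a + b) := by gcongr; exact hmM.trans hMC

theorem rpow_mul_rpow_le_mul_rpow {m M C a b s : ℝ} (hm : 0 ≤ m) (hmM : m ≤ M) (hMC : M ≤ C)
    (hs : 0 < s) (hsb : s ≤ b) (hab : 0 ≤ a + b - 2 * s) :
    M ^ a * m ^ b ≤ C ^ (a + b - 2 * s) * (M * m) ^ s := by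
  rcases hm.eq_or_lt with rfl | hm
  · rw [mul_zero, zero_rpow hs.ne', zero_rpow (hs.trans_le hsb).ne', mul_zero, mul_zero]
  have hM : 0 < M := hm.trans_le hmM
  calc M ^ a * m ^ b = M ^ (a - s) * m ^ (b - s) * (M * m) ^ s := by
        rw [mul_rpow hM.le hm.le, rpow_sub hM, rpow_sub hm]
        field_simp
    _ ≤ C ^ (a + b - 2 * s) * (M * m) ^ s := by
        rw [show a + b - 2 * s = (a - s) + (b - s) by ring]
        gcongr
        exact rpow_mul_rpow_le_rpow_add hm hmM hMC (sub_nonneg.2 hsb) (by linarith)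

section PowerBoundedDerivative

variable {f F : ℝ → ℝ} {A q : ℝ}

theorem abs_add_sub_sub_le_of_abs_deriv_le (hf : Differentiable ℝ f) (hf0 : f 0 = 0) (hA : 0 ≤ A)
    (hq : 0 ≤ q) (hf' : ∀ s, |deriv f s| ≤ A * |s| ^ q) {u v : ℝ} (huv : |v| ≤ |u|) :
    |f (u + v) - f u - f v| ≤ A * (2 ^ q + 1) * |u| ^ q * |v| := by
  have hderiv : ∀ t ∈ Metric.closedBall (0 : ℝ) |u|, HasDerivWithinAt (fun t => f (u + t) - f t)
      (deriv f (u + t) - deriv f t) (Metric.closedBall 0 |u|) t := fun t _ =>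
    (((hf (u + t)).hasDerivAt.comp_const_add u t).sub (hf t).hasDerivAt).hasDerivWithinAt
  have hbound : ∀ t ∈ Metric.closedBall (0 : ℝ) |u|,
      ‖deriv f (u + t) - deriv f t‖ ≤ A * (2 ^ q + 1) * |u| ^ q := by
    intro t ht
    rw [mem_closedBall_zero_iff, Real.norm_eq_abs] at ht
    have hut : |u + t| ≤ 2 * |u| := by linarith [abs_add_le u t]
    calc ‖deriv f (u + t) - deriv f t‖ ≤ |deriv f (u + t)| + |deriv f t| := abs_sub _ _
      _ ≤ A * |u + t| ^ q + A * |t| ^ q := add_le_add (hf' _) (hf' _)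
      _ ≤ A * (2 * |u|) ^ q + A * |u| ^ q := by gcongr
      _ = A * (2 ^ q + 1) * |u| ^ q := by rw [mul_rpow zero_le_two (abs_nonneg u)]; ring
  have hmvt := (convex_closedBall (0 : ℝ) |u|).norm_image_sub_le_of_norm_hasDerivWithin_le
    hderiv hbound (Metric.mem_closedBall_self (abs_nonneg u))
    (mem_closedBall_zero_iff.2 huv)
  simp only [add_zero, hf0, sub_zero, Real.norm_eq_abs] at hmvt
  rwa [sub_right_comm] at hmvt

theorem abs_antideriv_add_sub_le_of_abs_deriv_le (hf : Differentiable ℝ f)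
    (hF : ∀ x, HasDerivAt F (f x) x)
    (hf0 : f 0 = 0) (hF0 : F 0 = 0) (hA : 0 ≤ A) (hq : 0 ≤ q)
    (hf' : ∀ s, |deriv f s| ≤ A * |s| ^ q) {u v : ℝ} (huv : |v| ≤ |u|) :
    |F (u + v) - F u - F v - f u * v - f v * u| ≤
      (A * (2 ^ q + 1) * |u| ^ q * |v| + A * |u| * |v| ^ q) * |v| := by
  have hderiv : ∀ t ∈ Metric.closedBall (0 : ℝ) |v|,
      HasDerivWithinAt (fun t => F (u + t) - F t - f u * t - u * f t)
        (f (u + t) - f t - f u - u * deriv f t) (Metric.closedBall 0 |v|) t := fun t _ =>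
    ((((hF (u + t)).comp_const_add u t).sub (hF t)).sub ((hasDerivAt_id t).const_mul (f u))
      |>.sub ((hf t).hasDerivAt.const_mul u)).hasDerivWithinAt.congr_deriv (by ring)
  have hbound : ∀ t ∈ Metric.closedBall (0 : ℝ) |v|, ‖f (u + t) - f t - f u - u * deriv f t‖ ≤
      A * (2 ^ q + 1) * |u| ^ q * |v| + A * |u| * |v| ^ q := by
    intro t ht
    rw [mem_closedBall_zero_iff, Real.norm_eq_abs] at ht
    calc ‖f (u + t) - f t - f u - u * deriv f t‖
        ≤ |f (u + t) - f u - f t| + |u| * |deriv f t| := by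
          rw [Real.norm_eq_abs, ← abs_mul, sub_right_comm (f (u + t))]; exact abs_sub _ _
      _ ≤ A * (2 ^ q + 1) * |u| ^ q * |t| + |u| * (A * |t| ^ q) := by
          gcongr
          exacts [abs_add_sub_sub_le_of_abs_deriv_le hf hf0 hA hq hf' (ht.trans huv), hf' t]
      _ ≤ A * (2 ^ q + 1) * |u| ^ q * |v| + |u| * (A * |v| ^ q) := by gcongr
      _ = A * (2 ^ q + 1) * |u| ^ q * |v| + A * |u| * |v| ^ q := by ring
  have hmvt := (convex_closedBall (0 : ℝ) |v|).norm_image_sub_le_of_norm_hasDerivWithin_le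
    hderiv hbound (Metric.mem_closedBall_self (abs_nonneg v)) (mem_closedBall_zero_iff.2 le_rfl)
  simp only [add_zero, hf0, hF0, mul_zero, sub_zero, Real.norm_eq_abs] at hmvt
  convert hmvt using 2
  ring

theorem abs_add_sub_sub_le_mul_rpow (hf : Differentiable ℝ f) (hf0 : f 0 = 0) (hA : 0 ≤ A)
    (hq : 0 ≤ q) (hf' : ∀ s, |deriv f s| ≤ A * |s| ^ q) {σ C : ℝ} (hσ0 : 0 < σ) (hσ1 : σ ≤ 1)
    (hσq : 2 * σ ≤ q + 1) {u v : ℝ} (huv : |v| ≤ |u|) (hu : |u| ≤ C) :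
    |f (u + v) - f u - f v| ≤ A * (2 ^ q + 1) * C ^ (q + 1 - 2 * σ) * |u * v| ^ σ := by
  calc |f (u + v) - f u - f v| ≤ A * (2 ^ q + 1) * (|u| ^ q * |v| ^ (1 : ℝ)) := by
        rw [rpow_one, ← mul_assoc]; exact abs_add_sub_sub_le_of_abs_deriv_le hf hf0 hA hq hf' huv
    _ ≤ A * (2 ^ q + 1) * (C ^ (q + 1 - 2 * σ) * (|u| * |v|) ^ σ) :=
        mul_le_mul_of_nonneg_left
          (rpow_mul_rpow_le_mul_rpow (abs_nonneg v) huv hu hσ0 hσ1 (by linarith)) (by positivity)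
    _ = A * (2 ^ q + 1) * C ^ (q + 1 - 2 * σ) * |u * v| ^ σ := by rw [abs_mul]; ring

theorem abs_antideriv_add_sub_le_mul_rpow (hf : Differentiable ℝ f)
    (hF : ∀ x, HasDerivAt F (f x) x) (hf0 : f 0 = 0) (hF0 : F 0 = 0) (hA : 0 ≤ A) (hq : 0 ≤ q)
    (hf' : ∀ s, |deriv f s| ≤ A * |s| ^ q) {σ C : ℝ} (hσ0 : 0 < σ) (hσ1 : σ ≤ 1)
    (hσq : 4 * σ ≤ q + 2) {u v : ℝ} (huv : |v| ≤ |u|) (hu : |u| ≤ C) :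
    |F (u + v) - F u - F v - f u * v - f v * u| ≤
      (A * (2 ^ q + 1) + A) * C ^ (q + 2 - 4 * σ) * |u * v| ^ (2 * σ) := by
  have hexp₁ : q + 2 - 2 * (2 * σ) = q + 2 - 4 * σ := by ring
  have hexp₂ : 1 + (q + 1) - 2 * (2 * σ) = q + 2 - 4 * σ := by ring
  calc |F (u + v) - F u - F v - f u * v - f v * u|
      ≤ (A * (2 ^ q + 1) * |u| ^ q * |v| + A * |u| * |v| ^ q) * |v| :=
        abs_antideriv_add_sub_le_of_abs_deriv_le hf hF hf0 hF0 hA hq hf' huv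
    _ = A * (2 ^ q + 1) * (|u| ^ q * |v| ^ (2 : ℝ)) + A * (|u| ^ (1 : ℝ) * |v| ^ (q + 1)) := by
        rw [rpow_two, rpow_one, rpow_add_one' (abs_nonneg v) (by linarith)]; ring
    _ ≤ A * (2 ^ q + 1) * (C ^ (q + 2 - 2 * (2 * σ)) * (|u| * |v|) ^ (2 * σ))
        + A * (C ^ (1 + (q + 1) - 2 * (2 * σ)) * (|u| * |v|) ^ (2 * σ)) := by
        have hσ2 : 0 < 2 * σ := by positivity
        exact add_le_add
          (mul_le_mul_of_nonneg_left (rpow_mul_rpow_le_mul_rpow (abs_nonneg v) huv hu hσ2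
            (by linarith) (by linarith)) (by positivity))
          (mul_le_mul_of_nonneg_left (rpow_mul_rpow_le_mul_rpow (abs_nonneg v) huv hu hσ2
            (by linarith) (by linarith)) hA)
    _ = (A * (2 ^ q + 1) + A) * C ^ (q + 2 - 4 * σ) * |u * v| ^ (2 * σ) := by
        rw [hexp₁, hexp₂, abs_mul]; ring

theorem exists_superadditivity_defect_le (hf : Differentiable ℝ f)
    (hF : ∀ x, HasDerivAt F (f x) x) (hf0 : f 0 = 0) (hF0 : F 0 = 0) (hA : 0 < A) (hq : 0 ≤ q)
    (hf' : ∀ s, |deriv f s| ≤ A * |s| ^ q) {σ C : ℝ} (hσ0 : 0 < σ) (hσ1 : σ ≤ 1)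
    (hσq : 4 * σ ≤ q + 2) (hC : 0 < C) :
    ∃ C₆ > 0, ∀ u v : ℝ, |u| ≤ C → |v| ≤ C →
      |f (u + v) - f u - f v| ≤ C₆ * |u * v| ^ σ ∧
      |F (u + v) - F u - F v - f u * v - f v * u| ≤ C₆ * |u * v| ^ (2 * σ) := by
  set K := A * (2 ^ q + 1)
  have hK : 0 < K := by positivity
  set C₆ := K * C ^ (q + 1 - 2 * σ) + (K + A) * C ^ (q + 2 - 4 * σ)
  have hterm₁ : 0 < K * C ^ (q + 1 - 2 * σ) := by positivity
  have hterm₂ : 0 < (K + A) * C ^ (q + 2 - 4 * σ) := by positivity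
  refine ⟨C₆, by linarith, ?_⟩
  have hordered : ∀ u v : ℝ, |u| ≤ C → |v| ≤ |u| →
      |f (u + v) - f u - f v| ≤ C₆ * |u * v| ^ σ ∧
      |F (u + v) - F u - F v - f u * v - f v * u| ≤ C₆ * |u * v| ^ (2 * σ) := by
    intro u v hu huv
    have h₁ := abs_add_sub_sub_le_mul_rpow hf hf0 hA.le hq hf' hσ0 hσ1 (by linarith) huv hu
    have h₂ := abs_antideriv_add_sub_le_mul_rpow hf hF hf0 hF0 hA.le hq hf' hσ0 hσ1 hσq huv hu
    exact ⟨h₁.trans (mul_le_mul_of_nonneg_right (by linarith) (by positivity)),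
      h₂.trans (mul_le_mul_of_nonneg_right (by linarith) (by positivity))⟩
  intro u v hu hv
  rcases le_total |v| |u| with huv | hvu
  · exact hordered u v hu huv
  · obtain ⟨h₁, h₂⟩ := hordered v u hv hvu
    rw [add_comm u v, mul_comm u v]
    constructor
    · convert h₁ using 2; ring
    · convert h₂ using 2; ring

end PowerBoundedDerivative

theorem stmt11_general (N : ℕ) (hN : 3 ≤ N) (p : ℝ) (hp : p = 2 * N / ((N : ℝ) - 2))
    (A₂ : ℝ) (hA₂ : 0 < A₂)
    (f : ℝ → ℝ) (hodd : ∀ s : ℝ, f (-s) = -f s)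
    (hf1 : ContDiffOn ℝ 1 f (Set.Ici 0))
    (F : ℝ → ℝ) (hFdef : ∀ s : ℝ, F s = ∫ t in (0 : ℝ)..s, f t)
    (hfb : ∀ i : ℕ, i ≤ 3 → ∀ s : ℝ,
      |iteratedDeriv i f s| ≤ A₂ * |s| ^ (p - ((i : ℝ) + 1))) :
    ∃ σ : ℝ, σ ∈ Set.Ioc (1 / 2 : ℝ) 1 ∧ σ = min (p / 4) 1 ∧
      ∀ C₅ : ℝ, 1 ≤ C₅ → ∃ C₆ > 0, ∀ u v : ℝ, |u| ≤ C₅ → |v| ≤ C₅ →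
        |f (u + v) - f u - f v| ≤ C₆ * |u * v| ^ σ ∧
        |F (u + v) - F u - F v - f u * v - f v * u| ≤ C₆ * |u * v| ^ (2 * σ) := by
  have hp2 : 2 < p := by
    have hN3 : (3 : ℝ) ≤ N := by exact_mod_cast hN
    rw [hp, lt_div_iff₀ (by linarith)]
    linarith
  have hf : Differentiable ℝ f :=
    Function.Odd.differentiable_of_differentiableOn_Ici hodd (hf1.differentiableOn one_ne_zero)
  have hF : ∀ x, HasDerivAt F (f x) x := fun x => by
    rw [funext hFdef]
    exact (hf.continuous.integral_hasStrictDerivAt 0 x).hasDerivAt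
  have hf' : ∀ s, |deriv f s| ≤ A₂ * |s| ^ (p - 2) := fun s => by
    simpa [iteratedDeriv_one, one_add_one_eq_two] using hfb 1 (by norm_num) s
  refine ⟨min (p / 4) 1, ⟨lt_min (by linarith) (by norm_num), min_le_right _ _⟩, rfl,
    fun C₅ hC₅ => ?_⟩
  exact exists_superadditivity_defect_le hf hF (Function.Odd.map_zero hodd) (by simp [hFdef]) hA₂
    (by linarith) hf' (by positivity) (min_le_right _ _)
    (by linarith [min_le_left (p / 4) 1]) (by linarith)

/-- Lemma 4.7 (adapted from Ackermann–Clapp–Pacella): with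
`σ = min{2*/4, 1} ∈ (1/2, 1]`, for every `C₅ ≥ 1` there is `C₆ > 0` such that
`|f(u+v)-f(u)-f(v)| ≤ C₆|uv|^σ` and
`|F(u+v)-F(u)-F(v)-f(u)v-f(v)u| ≤ C₆|uv|^{2σ}` for `|u|,|v| ≤ C₅`. -/
theorem stmt11 (N : ℕ) (hN : 3 ≤ N) (p : ℝ) (hp : p = 2 * N / ((N : ℝ) - 2))
    (A₂ : ℝ) (hA₂ : 0 < A₂)
    (f : ℝ → ℝ) (hodd : ∀ s : ℝ, f (-s) = -f s)
    (hf1 : ContDiffOn ℝ 1 f (Set.Ici 0)) (hf3 : ContDiffOn ℝ 3 f (Set.Ioi 0))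
    (F : ℝ → ℝ) (hFdef : ∀ s : ℝ, F s = ∫ t in (0 : ℝ)..s, f t)
    (hFb : ∀ s : ℝ, |F s| ≤ A₂ * |s| ^ p)
    (hfb : ∀ i : ℕ, i ≤ 3 → ∀ s : ℝ,
      |iteratedDeriv i f s| ≤ A₂ * |s| ^ (p - ((i : ℝ) + 1))) :
    ∃ σ : ℝ, σ ∈ Set.Ioc (1 / 2 : ℝ) 1 ∧ σ = min (p / 4) 1 ∧
      ∀ C₅ : ℝ, 1 ≤ C₅ → ∃ C₆ > 0, ∀ u v : ℝ, |u| ≤ C₅ → |v| ≤ C₅ →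
        |f (u + v) - f u - f v| ≤ C₆ * |u * v| ^ σ ∧
        |F (u + v) - F u - F v - f u * v - f v * u| ≤ C₆ * |u * v| ^ (2 * σ) :=
  stmt11_general N hN p hp A₂ hA₂ f hodd hf1 F hFdef hfb
end

section
/- Assume N = 3 (so 2* = 6), and suppose w₀, w_y ≥ 0 satisfy w₀(x) ≤ C(1+|x−Ry₀|)^{−1}, w_y(x) ≤ C(1+|x−Ry|)^{−1} with |y₀| = 1, |y−y₀| = 2, and f satisfies the fourth-order Taylor-type bound |F(u+v) − F(u) − F(v) − f(u)v − f(v)u| ≤ C(u⁴v² + u³v³ + u²v⁴) for 0 ≤ u, v ≤ ‖w‖_∞. Then ∫_{ℝ³} |F(w₀+w_y) − F(w₀) − F(w_y) − f(w₀)w_y − f(w_y)w₀| dx ≤ C' R^{−2} for all R ≥ 1. -/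
open MeasureTheory Real Filter
open scoped Topology
set_option maxHeartbeats 1000000

lemma aux_int : Integrable (fun x : EuclideanSpace ℝ (Fin 3) => ((1 + ‖x‖)⁻¹) ^ 4) := by
  have h := integrable_one_add_norm (E := EuclideanSpace ℝ (Fin 3)) (μ := volume)
    (r := 4) (by simp; norm_num)
  refine h.congr (Filter.Eventually.of_forall fun x => ?_)
  have h1 : (0:ℝ) < 1 + ‖x‖ := by positivity
  show (1 + ‖x‖) ^ (-4 : ℝ) = ((1 + ‖x‖)⁻¹) ^ 4
  rw [show (-4 : ℝ) = -((4:ℕ):ℝ) by norm_num, rpow_neg h1.le, rpow_natCast, inv_pow]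

lemma key_ineq' {p q d : ℝ} (hp : 1 ≤ p) (hq : 1 ≤ q) (hqp : q ≤ p)
    (hd : d ≤ p + q - 2) (hd0 : 0 < d) :
    p⁻¹ ^ 4 * q⁻¹ ^ 2 + p⁻¹ ^ 3 * q⁻¹ ^ 3 + p⁻¹ ^ 2 * q⁻¹ ^ 4
      ≤ 12 * d⁻¹ ^ 2 * (p⁻¹ ^ 4 + q⁻¹ ^ 4) := by
  have hp0 : (0:ℝ) < p := by linarith
  have hq0 : (0:ℝ) < q := by linarith
  have h1 : p⁻¹ ≤ q⁻¹ := by gcongr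
  have h2 : d ≤ 2 * p := by linarith
  have h3 : p⁻¹ ≤ 2 * d⁻¹ := by
    rw [show (2:ℝ) * d⁻¹ = (d/2)⁻¹ by field_simp]
    apply inv_anti₀ (by linarith) (by linarith)
  have hpi : (0:ℝ) ≤ p⁻¹ := by positivity
  have hqi : (0:ℝ) ≤ q⁻¹ := by positivity
  have hdi : (0:ℝ) ≤ d⁻¹ := by positivity
  have e1 : p⁻¹ ^ 4 * q⁻¹ ^ 2 ≤ p⁻¹ ^ 2 * q⁻¹ ^ 4 := by
    have : p⁻¹ ^ 2 ≤ q⁻¹ ^ 2 := by gcongr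
    calc p⁻¹ ^ 4 * q⁻¹ ^ 2 = (p⁻¹^2 * q⁻¹^2) * p⁻¹^2 := by ring
    _ ≤ (p⁻¹^2 * q⁻¹^2) * q⁻¹^2 := by gcongr <;> positivity
    _ = p⁻¹ ^ 2 * q⁻¹ ^ 4 := by ring
  have e2 : p⁻¹ ^ 3 * q⁻¹ ^ 3 ≤ p⁻¹ ^ 2 * q⁻¹ ^ 4 := by
    calc p⁻¹ ^ 3 * q⁻¹ ^ 3 = (p⁻¹^2 * q⁻¹^3) * p⁻¹ := by ring
    _ ≤ (p⁻¹^2 * q⁻¹^3) * q⁻¹ := by gcongr <;> positivity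
    _ = p⁻¹ ^ 2 * q⁻¹ ^ 4 := by ring
  have e3 : p⁻¹ ^ 2 * q⁻¹ ^ 4 ≤ 4 * d⁻¹ ^ 2 * q⁻¹ ^ 4 := by
    have : p⁻¹ ^ 2 ≤ (2*d⁻¹)^2 := by gcongr
    calc p⁻¹ ^ 2 * q⁻¹ ^ 4 ≤ (2*d⁻¹)^2 * q⁻¹^4 := by gcongr <;> positivity
    _ = 4 * d⁻¹ ^ 2 * q⁻¹ ^ 4 := by ring
  nlinarith [pow_nonneg hpi 4, pow_nonneg hqi 4, pow_nonneg hdi 2,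
    mul_nonneg (mul_nonneg (by norm_num : (0:ℝ) ≤ 12) (pow_nonneg hdi 2)) (pow_nonneg hpi 4)]

lemma key_ineq {p q d : ℝ} (hp : 1 ≤ p) (hq : 1 ≤ q)
    (hd : d ≤ p + q - 2) (hd0 : 0 < d) :
    p⁻¹ ^ 4 * q⁻¹ ^ 2 + p⁻¹ ^ 3 * q⁻¹ ^ 3 + p⁻¹ ^ 2 * q⁻¹ ^ 4
      ≤ 12 * d⁻¹ ^ 2 * (p⁻¹ ^ 4 + q⁻¹ ^ 4) := by
  rcases le_total q p with h | h
  · exact key_ineq' hp hq h hd hd0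
  · have := key_ineq' hq hp h (by linarith) hd0
    linarith

/-- The `N = 3` estimate in Corollary 4.9: under the fourth-order Taylor-type
bound on `F` and the decay `w₀ ≤ C(1+|x−Ry₀|)⁻¹`, `w_y ≤ C(1+|x−Ry|)⁻¹`, the
mixed remainder satisfies `∫ |F(w₀+w_y) − F(w₀) − F(w_y) − f(w₀)w_y − f(w_y)w₀|
≤ C' R^{-2}` for `R ≥ 1`. -/
theorem stmt19 (C : ℝ) (hC : 0 < C)
    (y₀ y : EuclideanSpace ℝ (Fin 3)) (hy₀ : ‖y₀‖ = 1) (hy : ‖y - y₀‖ = 2)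
    (w₀ wy : ℝ → EuclideanSpace ℝ (Fin 3) → ℝ)
    (hw₀ : ∀ R : ℝ, ∀ x, 0 ≤ w₀ R x ∧ w₀ R x ≤ C * (1 + ‖x - R • y₀‖)⁻¹)
    (hwy : ∀ R : ℝ, ∀ x, 0 ≤ wy R x ∧ wy R x ≤ C * (1 + ‖x - R • y‖)⁻¹)
    (f F : ℝ → ℝ)
    (hF : ∀ u v : ℝ, 0 ≤ u → 0 ≤ v → u ≤ C → v ≤ C →
      |F (u + v) - F u - F v - f u * v - f v * u|
        ≤ C * (u ^ 4 * v ^ 2 + u ^ 3 * v ^ 3 + u ^ 2 * v ^ 4)) :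
    ∃ C' > 0, ∀ R : ℝ, 1 ≤ R →
      ∫ x, |F (w₀ R x + wy R x) - F (w₀ R x) - F (wy R x)
            - f (w₀ R x) * wy R x - f (wy R x) * w₀ R x|
        ≤ C' * R ^ (-2 : ℝ) := by
  set I₄ : ℝ := ∫ x : EuclideanSpace ℝ (Fin 3), ((1 + ‖x‖)⁻¹) ^ 4 with hI₄
  have hI₄nn : 0 ≤ I₄ := integral_nonneg fun x => by positivity
  refine ⟨6 * C ^ 7 * I₄ + 1, by nlinarith [hI₄nn, pow_pos hC 7], fun R hR => ?_⟩
  have hR0 : (0:ℝ) < R := by linarith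
  set a := R • y₀ with ha
  set b := R • y with hb
  have hab : ‖a - b‖ = 2 * R := by
    rw [ha, hb, ← smul_sub, norm_smul, Real.norm_eq_abs, abs_of_pos hR0]
    rw [show y₀ - y = -(y - y₀) by abel, norm_neg, hy]; ring
  -- the dominating function
  set g : EuclideanSpace ℝ (Fin 3) → ℝ :=
    fun x => 3 * C ^ 7 * R⁻¹ ^ 2 * (((1 + ‖x - a‖)⁻¹) ^ 4 + ((1 + ‖x - b‖)⁻¹) ^ 4) with hg
  have hgi : Integrable g := by
    exact (((aux_int.comp_sub_right a).add (aux_int.comp_sub_right b)).const_mul _)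
  have hbound : ∀ x, |F (w₀ R x + wy R x) - F (w₀ R x) - F (wy R x)
      - f (w₀ R x) * wy R x - f (wy R x) * w₀ R x| ≤ g x := by
    intro x
    set p : ℝ := 1 + ‖x - a‖ with hp
    set q : ℝ := 1 + ‖x - b‖ with hq
    have hp1 : (1:ℝ) ≤ p := by rw [hp]; linarith [norm_nonneg (x - a)]
    have hq1 : (1:ℝ) ≤ q := by rw [hq]; linarith [norm_nonneg (x - b)]
    have hpinv : p⁻¹ ≤ 1 := inv_le_one_of_one_le₀ hp1
    have hqinv : q⁻¹ ≤ 1 := inv_le_one_of_one_le₀ hq1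
    have hpinv0 : (0:ℝ) ≤ p⁻¹ := by positivity
    have hqinv0 : (0:ℝ) ≤ q⁻¹ := by positivity
    obtain ⟨hu0, hu⟩ := hw₀ R x
    obtain ⟨hv0, hv⟩ := hwy R x
    have huC : w₀ R x ≤ C := le_trans hu (by nlinarith)
    have hvC : wy R x ≤ C := le_trans hv (by nlinarith)
    have h1 := hF _ _ hu0 hv0 huC hvC
    have hd : (2 : ℝ) * R ≤ p + q - 2 := by
      have := norm_sub_le_norm_sub_add_norm_sub a x b
      rw [hab] at this; rw [hp, hq]
      have : ‖a - b‖ ≤ ‖x - a‖ + ‖x - b‖ := by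
        calc ‖a - b‖ = ‖(x - b) - (x - a)‖ := by congr 1; abel
        _ ≤ ‖x - b‖ + ‖x - a‖ := norm_sub_le _ _
        _ = ‖x - a‖ + ‖x - b‖ := by ring
      rw [← hab] at *
      linarith [this]
    have h2 : w₀ R x ^ 4 * wy R x ^ 2 + w₀ R x ^ 3 * wy R x ^ 3 + w₀ R x ^ 2 * wy R x ^ 4
        ≤ C ^ 6 * (p⁻¹ ^ 4 * q⁻¹ ^ 2 + p⁻¹ ^ 3 * q⁻¹ ^ 3 + p⁻¹ ^ 2 * q⁻¹ ^ 4) := by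
      have b1 : w₀ R x ^ 4 * wy R x ^ 2 ≤ (C * p⁻¹)^4 * (C * q⁻¹)^2 := by
        gcongr <;> assumption
      have b2 : w₀ R x ^ 3 * wy R x ^ 3 ≤ (C * p⁻¹)^3 * (C * q⁻¹)^3 := by
        gcongr <;> assumption
      have b3 : w₀ R x ^ 2 * wy R x ^ 4 ≤ (C * p⁻¹)^2 * (C * q⁻¹)^4 := by
        gcongr <;> assumption
      nlinarith [b1, b2, b3]
    have h3 := key_ineq hp1 hq1 hd (by linarith : (0:ℝ) < 2 * R)
    have h4 : (2 * R)⁻¹ ^ 2 = R⁻¹ ^ 2 / 4 := by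
      rw [mul_inv]; ring
    calc |F (w₀ R x + wy R x) - F (w₀ R x) - F (wy R x)
        - f (w₀ R x) * wy R x - f (wy R x) * w₀ R x|
        ≤ C * (w₀ R x ^ 4 * wy R x ^ 2 + w₀ R x ^ 3 * wy R x ^ 3 + w₀ R x ^ 2 * wy R x ^ 4) := h1
      _ ≤ C * (C ^ 6 * (p⁻¹ ^ 4 * q⁻¹ ^ 2 + p⁻¹ ^ 3 * q⁻¹ ^ 3 + p⁻¹ ^ 2 * q⁻¹ ^ 4)) := by
          gcongr
      _ ≤ C * (C ^ 6 * (12 * (2*R)⁻¹ ^ 2 * (p⁻¹ ^ 4 + q⁻¹ ^ 4))) := by gcongr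
      _ = 3 * C ^ 7 * R⁻¹ ^ 2 * (p⁻¹ ^ 4 + q⁻¹ ^ 4) := by rw [h4]; ring
      _ = g x := by rw [hg]
  have hmono := integral_mono_of_nonneg
    (f := fun x => |F (w₀ R x + wy R x) - F (w₀ R x) - F (wy R x)
      - f (w₀ R x) * wy R x - f (wy R x) * w₀ R x|) (g := g)
    (Filter.Eventually.of_forall fun x => abs_nonneg _) hgi
    (Filter.Eventually.of_forall hbound)
  have hgint : ∫ x, g x = 6 * C ^ 7 * I₄ * R⁻¹ ^ 2 := by
    rw [hg]
    simp only
    rw [integral_const_mul, integral_add (aux_int.comp_sub_right a) (aux_int.comp_sub_right b)]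
    rw [integral_sub_right_eq_self (fun x => ((1 + ‖x‖)⁻¹)^4) a,
        integral_sub_right_eq_self (fun x => ((1 + ‖x‖)⁻¹)^4) b]
    rw [← hI₄]; ring
  have hrp : R ^ (-2 : ℝ) = R⁻¹ ^ 2 := by
    rw [show (-2:ℝ) = -(2:ℕ) by norm_num, rpow_neg hR0.le, rpow_natCast, inv_pow]
  calc ∫ x, |F (w₀ R x + wy R x) - F (w₀ R x) - F (wy R x)
      - f (w₀ R x) * wy R x - f (wy R x) * w₀ R x| ≤ ∫ x, g x := hmono
    _ = 6 * C ^ 7 * I₄ * R⁻¹ ^ 2 := hgint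
    _ ≤ (6 * C ^ 7 * I₄ + 1) * R ^ (-2:ℝ) := by
        rw [hrp]; have : (0:ℝ) ≤ R⁻¹ ^ 2 := by positivity
        nlinarith
end
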